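/- arXiv:2008.08174 — 4 statements merged into one kernel-verified Lean document; each statement's English description precedes it below -/
import Mathlib

section
/- Let q ≥ 2, k ≥ 1 and let c₁, c₂ ∈ Σ_q^n with n ≥ k. Then D_k^{*(≤1)}(c₁) ∩ D_k^{*(≤1)}(c₂) = ∅ if and only if rt(c₁) ≠ rt(c₂) and { rt(w) : w ∈ D_k^{*(≤1)}(c₁) } ∩ { rt(w) : w ∈ D_k^{*(≤1)}(c₂) } = ∅. -/
open List

namespace NoisyDup

variable {q : ℕ}

/-- Tandem duplication `T_{i,k}`: duplicates the length-`k` substring starting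
after position `i` (0-based index `i`), if it exists. -/
def dup (i k : ℕ) (x : List (ZMod q)) : List (ZMod q) :=
  if i + k ≤ x.length then x.take i ++ (x.drop i).take k ++ x.drop i else x

/-- Add `a` (mod `q`) to the entry at 0-based index `i`. -/
def addAt (x : List (ZMod q)) (i : ℕ) (a : ZMod q) : List (ZMod q) :=
  x.set i (x.getD i 0 + a)

/-- One exact tandem duplication of length `k`. -/
def ExactStep (k : ℕ) (x y : List (ZMod q)) : Prop :=
  ∃ i, i + k ≤ x.length ∧ y = dup i k x

/-- One noisy duplication of length `k`: an exact duplication followed by adding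
some `a ≠ 0` to one symbol of the inserted copy (positions are 1-indexed). -/
def NoisyStep (k : ℕ) (x y : List (ZMod q)) : Prop :=
  ∃ (i : ℕ) (a : ZMod q) (j : ℕ), i + k ≤ x.length ∧ a ≠ 0 ∧
    i + k + 1 ≤ j ∧ j ≤ i + 2 * k ∧ y = addAt (dup i k x) (j - 1) a

/-- Descendants by exact duplications only: `D_k^{*(0)}`. -/
def ExactDesc (k : ℕ) (x y : List (ZMod q)) : Prop :=
  Relation.ReflTransGen (ExactStep k) x y

/-- The descendant cone `D_k^{*(≤1)}`: any number of exact duplications and at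
most one noisy duplication. -/
def descCone (k : ℕ) (x : List (ZMod q)) : Set (List (ZMod q)) :=
  {y | ExactDesc k x y ∨ ∃ u v, ExactDesc k x u ∧ NoisyStep k u v ∧ ExactDesc k v y}

/-- `φ̂(x)`: the first `k` symbols. -/
def hatPhi (k : ℕ) (x : List (ZMod q)) : List (ZMod q) := x.take k

/-- `φ̄(x)_i = x_{i+k} - x_i` (1-indexed), a string of length `|x| - k`. -/
def barPhi (k : ℕ) (x : List (ZMod q)) : List (ZMod q) :=
  (List.range (x.length - k)).map fun i => x.getD (i + k) 0 - x.getD i 0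

/-- Auxiliary for `mu`: `cnt` counts the current run of zeros. -/
def muAux (k : ℕ) : ℕ → List (ZMod q) → List (ZMod q)
  | cnt, [] => List.replicate (cnt % k) 0
  | cnt, a :: t =>
      if a = 0 then muAux k (cnt + 1) t
      else List.replicate (cnt % k) 0 ++ a :: muAux k 0 t

/-- `μ(z)`: reduce the length of every maximal run of zeros modulo `k`. -/
def mu (k : ℕ) (z : List (ZMod q)) : List (ZMod q) := muAux k 0 z

/-- `x` contains a tandem repeat of length `k`. -/
def HasRepeat (k : ℕ) (x : List (ZMod q)) : Prop :=
  ∃ i, i + 2 * k ≤ x.length ∧ (x.drop i).take k = (x.drop (i + k)).take k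

/-- `x` is irreducible: it contains no tandem repeat of length `k`. -/
def IsIrreducible (k : ℕ) (x : List (ZMod q)) : Prop := ¬ HasRepeat k x

/-- The duplication root: the (unique) irreducible ancestor of `x` under exact
duplications of length `k`. -/
noncomputable def rt (k : ℕ) (x : List (ZMod q)) : List (ZMod q) :=
  haveI := Classical.propDecidable (∃ z, IsIrreducible k z ∧ ExactDesc k z x)
  if h : ∃ z, IsIrreducible k z ∧ ExactDesc k z x then h.choose else x

/-- The set of irreducible strings of length `n` over `Σ_q`. -/
def Irr (k n : ℕ) : Set (List (ZMod q)) := {x | x.length = n ∧ IsIrreducible k x}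

/-- `ins_k(u, j)`: the subsequence of entries in (1-indexed) positions congruent
to `j` modulo `k`. -/
def splitk (k j : ℕ) (u : List (ZMod q)) : List (ZMod q) :=
  ((u.zipIdx.map Prod.swap).filter fun p => p.1 % k == j - 1).map Prod.snd

/-- The interleaving `inl(u) = ins_k(u,1) ⋯ ins_k(u,k)`. -/
def inl (k : ℕ) (u : List (ZMod q)) : List (ZMod q) :=
  ((List.range k).map fun j => splitk k (j + 1) u).flatten

/-- The indicator `Γ(z)` of the nonzero entries of `z`. -/
def gamma (z : List (ZMod q)) : List Bool := z.map fun a => decide (a ≠ 0)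

/-- The cumulative-sum map (mod `q`). -/
def cusum (z : List (ZMod q)) : List (ZMod q) :=
  (List.range z.length).map fun i => (z.take (i + 1)).sum

/-- Hamming weight of a binary string. -/
def wt (u : List Bool) : ℕ := u.count true

/-- The VT syndrome `Σ i·u_i` (1-indexed). -/
def vtSum (u : List Bool) : ℕ := ((u.zipIdx.map Prod.swap).map fun p => if p.2 then p.1 + 1 else 0).sum

/-- The (variable-length) Varshamov–Tenengolts code. -/
def CVT (α m : ℕ) : Set (List Bool) := {z | z.length ≤ m - 1 ∧ vtSum z % m = α}

/-- `Σ_{i=1}^{|u|} i · (u_1 + ⋯ + u_i)`. -/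
def wSum (u : List Bool) : ℕ :=
  ((List.range u.length).map fun i => (i + 1) * wt (u.take (i + 1))).sum

/-- Tenengolts' binary map `ζ`. -/
def zeta (z : List (ZMod q)) : List Bool :=
  (z.zipIdx.map Prod.swap).map fun p => if p.1 = 0 then true else decide ((z.getD (p.1 - 1) 0).val ≤ p.2.val)

/-- `Σ_{i=1}^{|z|} (i-1)·ζ(z)_i`. -/
def tqSum (z : List (ZMod q)) : ℕ := (((zeta z).zipIdx.map Prod.swap).map fun p => if p.2 then p.1 else 0).sum

/-- Tenengolts' (variable-length) `q`-ary single-indel-correcting code. -/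
def CTq (α β m : ℕ) : Set (List (ZMod q)) :=
  {z | z.length ≤ m ∧ (z.map ZMod.val).sum % q = α ∧ tqSum z % m = β}

/-- The length of `s_j = Γ(ins_k(μ,j))` for a codeword of length `n`
(the number of positions in `{1,…,n-k}` congruent to `j` mod `k`). -/
def sLen (k n j : ℕ) : ℕ := (List.range (n - k)).countP fun i => i % k == j - 1

/-- Admissibility of the parameters of the code `C_nd`. -/
def Admissible (q k n : ℕ) (a c : ℕ → ℕ) (b a1 a2 a3 a4 b1 b2 b3 b4 : ℕ) : Prop :=
  (∀ j ∈ Finset.Icc 1 k, a j ≤ 2 * (sLen k n j + 1)) ∧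
  (∀ j ∈ Finset.Icc 1 k, c j ≤ 2 * sLen k n j) ∧
  b ≤ 4 ∧ a1 ≤ q - 1 ∧ a2 ≤ q - 1 ∧ a3 ≤ q - 1 ∧ a4 ≤ q - 1 ∧
  b1 ≤ (n - k) / 2 ∧ b2 ≤ (n - k) / 2 ∧ b3 ≤ n - k - 1 ∧ b4 ≤ n - k - 1

/-- The code `C_nd` for the noisy duplication channel. -/
def Cnd (k n : ℕ) (a c : ℕ → ℕ) (b a1 a2 a3 a4 b1 b2 b3 b4 : ℕ) : Set (List (ZMod q)) :=
  {x | x.length = n ∧ IsIrreducible k x ∧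
    (∀ j ∈ Finset.Icc 1 k,
        gamma (splitk k j (mu k (barPhi k x))) ∈
          CVT (a j) (2 * (gamma (splitk k j (mu k (barPhi k x)))).length + 3)) ∧
    (∀ j ∈ Finset.Icc 1 k,
        wSum (gamma (splitk k j (mu k (barPhi k x)))) %
          (2 * (gamma (splitk k j (mu k (barPhi k x)))).length + 1) = c j) ∧
    ((Finset.Icc 1 k).sum fun j => wt (gamma (splitk k j (mu k (barPhi k x))))) % 5 = b ∧
    splitk 2 1 (inl k (mu k (barPhi k x))) ∈ CTq a1 b1 ((n - k + 1) / 2) ∧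
    splitk 2 2 (inl k (mu k (barPhi k x))) ∈ CTq a2 b2 ((n - k + 1) / 2) ∧
    cusum (inl k (mu k (barPhi k x))) ∈ CTq a3 b3 (n - k) ∧
    inl k (mu k (barPhi k x)) ∈ CTq a4 b4 (n - k)}

/-- `w` is obtained from `u` by deleting one occurrence of the symbol `b`. -/
def delSymb (u w : List (ZMod q)) (b : ZMod q) : Prop :=
  ∃ i, i < u.length ∧ u.getD i 0 = b ∧ w = u.eraseIdx i

/-- `w` is obtained from `u` by inserting the symbol `b` at some position. -/
def insOne (u w : List (ZMod q)) (b : ZMod q) : Prop :=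
  ∃ i, i ≤ u.length ∧ w = u.take i ++ b :: u.drop i

/-- `w` is obtained from `u` by inserting the adjacent pair `b, c`. -/
def insPair (u w : List (ZMod q)) (b c : ZMod q) : Prop :=
  ∃ i, i ≤ u.length ∧ w = u.take i ++ b :: c :: u.drop i

/-- `w` is obtained from `u` by inserting two `0`s separated by exactly one
(unchanged) symbol of `u`. -/
def insSpread0 (u w : List (ZMod q)) : Prop :=
  ∃ i, i < u.length ∧ w = u.take i ++ 0 :: u.getD i 0 :: 0 :: u.drop (i + 1)

/-- `w` is obtained from `u` by inserting a nonzero `a` and replacing the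
symbol `c` immediately following the insertion point by `c - a`. -/
def insSub (u w : List (ZMod q)) : Prop :=
  ∃ a : ZMod q, a ≠ 0 ∧ ∃ i, i < u.length ∧
    w = u.take i ++ a :: (u.getD i 0 - a) :: u.drop (i + 1)

/-- `w` is obtained from `u` by replacing a single symbol `0` by a nonzero symbol. -/
def subOne (u w : List (ZMod q)) : Prop :=
  ∃ i, i < u.length ∧ u.getD i 0 = 0 ∧ ∃ a : ZMod q, a ≠ 0 ∧ w = u.set i a

/-- `w` is obtained from `u` by replacing two adjacent symbols `0, c` by
`a, c - a` for some nonzero `a`. -/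
def subTwo (u w : List (ZMod q)) : Prop :=
  ∃ i, i + 1 < u.length ∧ u.getD i 0 = 0 ∧ ∃ a : ZMod q, a ≠ 0 ∧
    w = u.take i ++ a :: (u.getD (i + 1) 0 - a) :: u.drop (i + 2)

/-- `w` is obtained from `u` by swapping an adjacent pair `b, 0` (with `b ≠ 0`)
into `0, b`. -/
def swapPair (u w : List (ZMod q)) : Prop :=
  ∃ i, i + 1 < u.length ∧ u.getD i 0 ≠ 0 ∧ u.getD (i + 1) 0 = 0 ∧
    w = u.take i ++ 0 :: u.getD i 0 :: u.drop (i + 2)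

/-- `w` is obtained from `u` by deleting a single symbol. -/
def delQ (u w : List (ZMod q)) : Prop := ∃ i, i < u.length ∧ w = u.eraseIdx i

/-- `w` is obtained from `u` by inserting a single symbol. -/
def insQ (u w : List (ZMod q)) : Prop :=
  ∃ (i : ℕ) (b : ZMod q), i ≤ u.length ∧ w = u.take i ++ b :: u.drop i


/-!
Exact duplications satisfy a diamond property (two duplications at positions `i ≤ i'` commute
once the later one is shifted by `k`), so by Church–Rosser two words with the same duplication
root have a common exact descendant. Descendant cones are closed under exact duplication, hence
two cones meet iff their sets of roots do; and `rt c₁ ≠ rt c₂` is part of the latter condition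
because each `cᵢ` lies in its own cone.
-/

lemma dup_of_le {i k : ℕ} {x : List (ZMod q)} (h : i + k ≤ x.length) :
    dup i k x = x.take (i + k) ++ x.drop i := by
  rw [dup, if_pos h, List.take_add, List.append_assoc]

lemma length_dup {i k : ℕ} {x : List (ZMod q)} (h : i + k ≤ x.length) :
    (dup i k x).length = x.length + k := by
  rw [dup_of_le h, List.length_append, List.length_take, List.length_drop]
  omega

lemma dup_dup_of_le {i i' k : ℕ} {x : List (ZMod q)} (hii' : i ≤ i') (h : i' + k ≤ x.length) :
    dup i k (dup i' k x) = dup (i' + k) k (dup i k x) := by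
  have h' : i + k ≤ x.length := by omega
  rw [dup_of_le (x := dup i' k x) (by rw [length_dup h]; omega),
    dup_of_le (x := dup i k x) (by rw [length_dup h']; omega), dup_of_le h', dup_of_le h]
  apply List.ext_getElem
  · simp only [List.length_append, List.length_take, List.length_drop]; omega
  · intro n h1 h2
    simp only [List.getElem_append, List.getElem_take, List.getElem_drop, List.length_append,
      List.length_take, List.length_drop]
    split_ifs <;> (try congr 1) <;> omega

lemma ExactStep.diamond {k : ℕ} {x y z : List (ZMod q)} (hy : ExactStep k x y)
    (hz : ExactStep k x z) :
    ∃ w, Relation.ReflGen (ExactStep k) y w ∧ Relation.ReflTransGen (ExactStep k) z w := by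
  obtain ⟨i, hi, rfl⟩ := hy
  obtain ⟨i', hi', rfl⟩ := hz
  rcases le_total i i' with hii' | hi'i
  · refine ⟨dup (i' + k) k (dup i k x), .single ⟨i' + k, ?_, rfl⟩,
      .single ⟨i, ?_, (dup_dup_of_le hii' hi').symm⟩⟩
    · rw [length_dup hi]; omega
    · rw [length_dup hi']; omega
  · refine ⟨dup i' k (dup i k x), .single ⟨i', ?_, rfl⟩,
      .single ⟨i + k, ?_, dup_dup_of_le hi'i hi⟩⟩
    · rw [length_dup hi]; omega
    · rw [length_dup hi']; omega

lemma ExactDesc.join {k : ℕ} {x y z : List (ZMod q)} (hy : ExactDesc k x y)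
    (hz : ExactDesc k x z) : ∃ w, ExactDesc k y w ∧ ExactDesc k z w :=
  Relation.church_rosser (fun _ _ _ => ExactStep.diamond) hy hz

lemma exactDesc_rt (k : ℕ) (x : List (ZMod q)) : ExactDesc k (rt k x) x := by
  unfold rt
  split_ifs with h
  · exact h.choose_spec.2
  · exact .refl

lemma exists_exactDesc_of_rt_eq {k : ℕ} {x y : List (ZMod q)} (h : rt k x = rt k y) :
    ∃ w, ExactDesc k x w ∧ ExactDesc k y w := by
  have hx := exactDesc_rt k x
  rw [h] at hx
  exact hx.join (exactDesc_rt k y)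

lemma disjoint_image_rt_iff {k : ℕ} {A B : Set (List (ZMod q))}
    (hA : ∀ x ∈ A, ∀ y, ExactDesc k x y → y ∈ A) (hB : ∀ x ∈ B, ∀ y, ExactDesc k x y → y ∈ B) :
    Disjoint (rt k '' A) (rt k '' B) ↔ Disjoint A B := by
  refine ⟨Disjoint.of_image, fun hAB => Set.disjoint_image_image fun x hx y hy hxy => ?_⟩
  obtain ⟨w, hxw, hyw⟩ := exists_exactDesc_of_rt_eq hxy
  exact Set.disjoint_left.1 hAB (hA x hx w hxw) (hB y hy w hyw)

lemma mem_descCone_of_exactDesc {k : ℕ} {c x y : List (ZMod q)} (hx : x ∈ descCone k c)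
    (hxy : ExactDesc k x y) : y ∈ descCone k c := by
  rcases hx with hx | ⟨u, v, hcu, huv, hvx⟩
  · exact .inl (hx.trans hxy)
  · exact .inr ⟨u, v, hcu, huv, hvx.trans hxy⟩

lemma mem_descCone_self (k : ℕ) (c : List (ZMod q)) : c ∈ descCone k c :=
  .inl .refl

theorem disjoint_cones_iff_roots_general
    (q k : ℕ)
    (c₁ c₂ : List (ZMod q)) :
    descCone k c₁ ∩ descCone k c₂ = ∅ ↔
      (rt k c₁ ≠ rt k c₂ ∧
        (rt k '' descCone k c₁) ∩ (rt k '' descCone k c₂) = ∅) := by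
  have hroots := disjoint_image_rt_iff (k := k) (A := descCone k c₁) (B := descCone k c₂)
    (fun _ hx _ => mem_descCone_of_exactDesc hx) (fun _ hx _ => mem_descCone_of_exactDesc hx)
  have hself (h : Disjoint (rt k '' descCone k c₁) (rt k '' descCone k c₂)) : rt k c₁ ≠ rt k c₂ :=
    fun he => Set.disjoint_left.1 h ⟨c₁, mem_descCone_self k c₁, he⟩ ⟨c₂, mem_descCone_self k c₂, rfl⟩
  rw [← Set.disjoint_iff_inter_eq_empty, ← Set.disjoint_iff_inter_eq_empty, hroots]
  exact ⟨fun h => ⟨hself (hroots.2 h), h⟩, And.right⟩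

/-- the descendant cones `D_k^{*(≤1)}` of two words are disjoint
iff their duplication roots differ and the sets of roots of their descendant
cones are disjoint. -/
theorem disjoint_cones_iff_roots
    (q k n : ℕ) (hq : 2 ≤ q) (hk : 1 ≤ k) (hn : k ≤ n)
    (c₁ c₂ : List (ZMod q)) (h1 : c₁.length = n) (h2 : c₂.length = n) :
    descCone k c₁ ∩ descCone k c₂ = ∅ ↔
      (rt k c₁ ≠ rt k c₂ ∧
        (rt k '' descCone k c₁) ∩ (rt k '' descCone k c₂) = ∅) :=
  disjoint_cones_iff_roots_general q k c₁ c₂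

end NoisyDup
end

section
/- Let q ≥ 2, let v ∈ Σ_q^m with m ≥ 1, let p ∈ {1,…,m}, let c = v_p, and let a ∈ Σ_q. Let w ∈ Σ_q^{m+1} be the string obtained from v by replacing the single symbol c at position p by the two adjacent symbols a, (c − a mod q). Then cusum(w) is obtained from cusum(v) by inserting the single symbol (v₁ + ⋯ + v_{p−1} + a mod q) immediately after position p − 1; in particular, replacing a symbol by two symbols summing to it turns into a single symbol insertion under the cumulative-sum map. -/
open List

namespace NoisyDup

variable {q : ℕ}

/-!
Every entry of `cusum v` is a prefix sum of `v`. Splitting `v_p` into `a, v_p - a` keeps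
all prefix sums of `v` (the two new symbols add up to the old one) and creates exactly one
new prefix, ending between them, whose sum is `v₁ + ⋯ + v_{p-1} + a`.
-/

lemma cusum_cons (b : ZMod q) (t : List (ZMod q)) :
    cusum (b :: t) = b :: (cusum t).map (b + ·) := by
  simp [cusum, List.range_succ_eq_map, Function.comp_def]

lemma cusum_append (x y : List (ZMod q)) :
    cusum (x ++ y) = cusum x ++ (cusum y).map (x.sum + ·) := by
  induction x with
  | nil => simp [cusum]
  | cons b x ih =>
    simp [cusum_cons, ih, Function.comp_def, add_assoc]

lemma cusum_cons_cons (a b : ZMod q) (y : List (ZMod q)) :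
    cusum (a :: b :: y) = a :: cusum ((a + b) :: y) := by
  simp [cusum_cons, Function.comp_def, add_assoc]

lemma take_cusum (n : ℕ) (v : List (ZMod q)) : (cusum v).take n = cusum (v.take n) := by
  induction v generalizing n with
  | nil => simp [cusum]
  | cons b t ih =>
    cases n with
    | zero => simp [cusum]
    | succ n => simp [cusum_cons, ← List.map_take, ih]

lemma drop_cusum (n : ℕ) (v : List (ZMod q)) :
    (cusum v).drop n = (cusum (v.drop n)).map ((v.take n).sum + ·) := by
  induction v generalizing n with
  | nil => simp [cusum]
  | cons b t ih =>
    cases n with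
    | zero => simp
    | succ n => simp [cusum_cons, ← List.map_drop, ih, Function.comp_def, add_assoc]

theorem cusum_of_split_symbol_general
    (q m : ℕ)
    (v : List (ZMod q)) (hv : v.length = m)
    (p : ℕ) (hp1 : 1 ≤ p) (hp2 : p ≤ m) (a : ZMod q) :
    cusum (v.take (p - 1) ++ a :: (v.getD (p - 1) 0 - a) :: v.drop p) =
      (cusum v).take (p - 1) ++ ((v.take (p - 1)).sum + a) :: (cusum v).drop (p - 1) := by
  have hlt : p - 1 < v.length := by omega
  have hdrop : v.drop (p - 1) = v.getD (p - 1) 0 :: v.drop p := by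
    rw [List.getD_eq_getElem _ _ hlt, List.drop_eq_getElem_cons hlt, Nat.sub_add_cancel hp1]
  rw [cusum_append, cusum_cons_cons, add_sub_cancel, take_cusum, drop_cusum, hdrop,
    List.map_cons]

/-- replacing the symbol `c = v_p` by the two adjacent symbols
`a, c - a` turns, under the cumulative-sum map, into the insertion of the single
symbol `v₁ + ⋯ + v_{p-1} + a` immediately after position `p - 1`. -/
theorem cusum_of_split_symbol
    (q m : ℕ) (hq : 2 ≤ q) (hm : 1 ≤ m)
    (v : List (ZMod q)) (hv : v.length = m)
    (p : ℕ) (hp1 : 1 ≤ p) (hp2 : p ≤ m) (a : ZMod q) :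
    cusum (v.take (p - 1) ++ a :: (v.getD (p - 1) 0 - a) :: v.drop p) =
      (cusum v).take (p - 1) ++ ((v.take (p - 1)).sum + a) :: (cusum v).drop (p - 1) :=
  cusum_of_split_symbol_general q m v hv p hp1 hp2 a

end NoisyDup
end

section
/- Let m ≥ 1 and 0 ≤ α ≤ m − 1, and let u, v ∈ C_VT(α, m) with |u| = |v| ≤ m − 1. If some binary word w can be obtained from u by deleting a single bit and also obtained from v by deleting a single bit, then u = v; likewise, if some binary word w can be obtained from u by inserting a single bit and also obtained from v by inserting a single bit, then u = v. That is, when the length of the stored word is known, the variable-length VT code C_VT(α, m) corrects a single insertion or deletion. -/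
namespace BinCode

/-- Hamming weight of a binary string. -/
def wt (u : List Bool) : ℕ := u.count true

/-- The VT syndrome `Σ_{i=1}^{|u|} i·u_i` (positions 1-indexed). -/
def vtSum (u : List Bool) : ℕ := (u.zipIdx.map fun p => if p.1 then p.2 + 1 else 0).sum

/-- `Σ_{i=1}^{|u|} i · (u_1 + ⋯ + u_i)`. -/
def wSum (u : List Bool) : ℕ :=
  ((List.range u.length).map fun i => (i + 1) * wt (u.take (i + 1))).sum

/-- The (variable-length) Varshamov–Tenengolts code `C_VT(α, m)`. -/
def CVT (α m : ℕ) : Set (List Bool) := {z | z.length ≤ m - 1 ∧ vtSum z % m = α}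

/-- The binary code `C_{(a,b,c)} ⊆ {0,1}^n`. -/
def Cabc (n a b c : ℕ) : Set (List Bool) :=
  {u | u.length = n ∧ vtSum u % (2 * n + 3) = a ∧ wt u % 5 = b ∧
    wSum u % (2 * n + 1) = c}

/-- `w` is obtained from `u` by deleting one bit. -/
def delBit (u w : List Bool) : Prop := ∃ i, i < u.length ∧ w = u.eraseIdx i

/-- `w` is obtained from `u` by inserting the bit `b` at some position. -/
def insBitAt (u w : List Bool) (b : Bool) : Prop :=
  ∃ i, i ≤ u.length ∧ w = u.take i ++ b :: u.drop i

/-- `w` is obtained from `u` by inserting one bit. -/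
def insBit (u w : List Bool) : Prop := ∃ b, insBitAt u w b

/-- Flip the bit at 0-based index `i`. -/
def flipAt (u : List Bool) (i : ℕ) : List Bool := u.set i (!(u.getD i false))

/-- `w` is obtained from `u` by flipping one bit. -/
def flip1 (u w : List Bool) : Prop := ∃ i, i < u.length ∧ w = flipAt u i

/-- `w` is obtained from `u` by flipping two adjacent bits. -/
def flip2 (u w : List Bool) : Prop :=
  ∃ i, i + 1 < u.length ∧ w = flipAt (flipAt u i) (i + 1)

/-- `w` is obtained from `u` by replacing one bit by two adjacent bits via
`0 → 11` or `1 → 00`. -/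
def expand1 (u w : List Bool) : Prop :=
  ∃ i, i < u.length ∧
    ((u.getD i false = false ∧ w = u.take i ++ true :: true :: u.drop (i + 1)) ∨
     (u.getD i false = true ∧ w = u.take i ++ false :: false :: u.drop (i + 1)))

/-- `w` is obtained from `u` by inserting the adjacent pair `b b`. -/
def insPair (u w : List Bool) (b : Bool) : Prop :=
  ∃ i, i ≤ u.length ∧ w = u.take i ++ b :: b :: u.drop i

/-- `w` is obtained from `u` by replacing an occurrence of `1` by `010`. -/
def oneTo010 (u w : List Bool) : Prop :=
  ∃ i, i < u.length ∧ u.getD i false = true ∧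
    w = u.take i ++ false :: true :: false :: u.drop (i + 1)

/-!
Inserting a bit `a` into a word `w` before position `i` raises the VT sum by
`vtDelta w i a = [a] (i + 1) + wt (w.drop i)`, a number between `0` and `|w| + 1`. Every
insertion of a `0` scores at most `wt w` and every insertion of a `1` more than that, and
two insertions of the same bit with equal scores differ only by a shift along a run of that
bit, so they produce the same word. Hence two codewords of length `n < m` with a common
subsequence of length `n - 1` agree, their VT sums being congruent modulo `m`.

Two distinct words with a common single-insertion supersequence `W` also have a common
single-deletion subsequence (delete both inserted positions from `W`), which reduces
insertions to deletions.
-/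

open List

section Insertion

variable {α : Type*}

theorem insertIdx_eq_take_append_cons_drop {l : List α} {i : ℕ} (h : i ≤ l.length) (a : α) :
    l.insertIdx i a = l.take i ++ a :: l.drop i := by
  induction l generalizing i with
  | nil => simp_all
  | cons x t ih =>
    cases i with
    | zero => simp
    | succ i => simp [insertIdx_succ_cons, ih (by simpa using h)]

theorem insertIdx_eq_insertIdx_add_of_forall_mem_take_drop {l : List α} {i k : ℕ} {a : α}
    (hk : i + k ≤ l.length) (hrun : ∀ x ∈ (l.drop i).take k, x = a) :
    l.insertIdx i a = l.insertIdx (i + k) a := by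
  have hs : (l.drop i).take k = replicate k a :=
    eq_replicate_iff.2 ⟨by simp only [length_take, length_drop]; omega, hrun⟩
  have hdrop : l.drop i = replicate k a ++ l.drop (i + k) := by
    rw [← hs, ← drop_drop, take_append_drop]
  rw [insertIdx_eq_take_append_cons_drop (by omega), insertIdx_eq_take_append_cons_drop hk,
    take_add, hs, hdrop, ← cons_append, ← replicate_succ, replicate_succ']
  simp

end Insertion

theorem wt_append (p s : List Bool) : wt (p ++ s) = wt p + wt s := count_append ..

theorem wt_take_add_wt_drop (l : List Bool) (i : ℕ) : wt (l.take i) + wt (l.drop i) = wt l := by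
  rw [← wt_append, take_append_drop]

theorem wt_le_length (l : List Bool) : wt l ≤ l.length := count_le_length

theorem sum_map_zipIdx_eq_mul_wt_add_vtSum (l : List Bool) (n : ℕ) :
    ((l.zipIdx n).map fun p => if p.1 then p.2 + 1 else 0).sum = n * wt l + vtSum l := by
  induction l generalizing n with
  | nil => simp [vtSum, wt]
  | cons x t ih =>
    simp only [vtSum.eq_1 (x :: t), zipIdx_cons, map_cons, sum_cons, ih, wt, count_cons]
    cases x <;> simp <;> ring

theorem vtSum_append (p s : List Bool) :
    vtSum (p ++ s) = vtSum p + p.length * wt s + vtSum s := by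
  rw [vtSum, zipIdx_append, map_append, sum_append, zero_add,
    sum_map_zipIdx_eq_mul_wt_add_vtSum s, ← add_assoc]
  rfl

/-- Inserting `a` before position `i` raises `vtSum` by this amount: `a` itself lands at
position `i + 1`, and every `1` behind it moves one place to the right. -/
def vtDelta (l : List Bool) (i : ℕ) (a : Bool) : ℕ := (if a then i + 1 else 0) + wt (l.drop i)

theorem vtSum_insertIdx {l : List Bool} {i : ℕ} (hi : i ≤ l.length) (a : Bool) :
    vtSum (l.insertIdx i a) = vtSum l + vtDelta l i a := by
  rw [insertIdx_eq_take_append_cons_drop hi a, vtSum_append, ← singleton_append, vtSum_append,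
    wt_append, vtDelta, length_take_of_le hi]
  conv_rhs => rw [← take_append_drop i l, vtSum_append, length_take_of_le hi]
  cases a <;> simp [vtSum, wt] <;> ring

theorem vtDelta_le {l : List Bool} {i : ℕ} (hi : i ≤ l.length) (a : Bool) :
    vtDelta l i a ≤ l.length + 1 := by
  have := wt_le_length (l.drop i)
  rw [length_drop] at this
  cases a <;> simp only [vtDelta] <;> split_ifs <;> omega

theorem vtDelta_false_lt_vtDelta_true (l : List Bool) (i j : ℕ) :
    vtDelta l i false < vtDelta l j true := by
  have hi := wt_take_add_wt_drop l i
  have hj := wt_take_add_wt_drop l j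
  have htake : wt (l.take j) ≤ j := (wt_le_length _).trans (length_take_le j l)
  simp only [vtDelta, Bool.false_eq_true, if_false, if_true]
  omega

theorem forall_mem_take_drop_eq_of_vtDelta_eq {l : List Bool} {i k : ℕ} {a : Bool}
    (hk : i + k ≤ l.length) (h : vtDelta l i a = vtDelta l (i + k) a) :
    ∀ x ∈ (l.drop i).take k, x = a := by
  have hsplit := wt_take_add_wt_drop (l.drop i) k
  have hlen : ((l.drop i).take k).length = k := by simp only [length_take, length_drop]; omega
  rw [drop_drop] at hsplit
  cases a
  · simp only [vtDelta, Bool.false_eq_true, if_false] at h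
    have hzero : wt ((l.drop i).take k) = 0 := by omega
    intro x hx
    cases x
    · rfl
    · exact absurd hx (count_eq_zero.1 hzero)
  · simp only [vtDelta, if_true] at h
    have hfull : wt ((l.drop i).take k) = ((l.drop i).take k).length := by omega
    exact fun x hx => (count_eq_length.1 hfull x hx).symm

theorem insertIdx_eq_insertIdx_of_vtDelta_eq {l : List Bool} {i j : ℕ} {a b : Bool}
    (hi : i ≤ l.length) (hj : j ≤ l.length) (h : vtDelta l i a = vtDelta l j b) :
    l.insertIdx i a = l.insertIdx j b := by
  obtain rfl : a = b := by
    cases a <;> cases b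
    · rfl
    · exact absurd h (vtDelta_false_lt_vtDelta_true l i j).ne
    · exact absurd h (vtDelta_false_lt_vtDelta_true l j i).ne'
    · rfl
  wlog hij : i ≤ j generalizing i j
  · exact (this hj hi h.symm (by omega)).symm
  obtain ⟨k, rfl⟩ := Nat.exists_eq_add_of_le hij
  exact insertIdx_eq_insertIdx_add_of_forall_mem_take_drop hj
    (forall_mem_take_drop_eq_of_vtDelta_eq hj h)

theorem exists_eq_insertIdx_of_delBit {u w : List Bool} (h : delBit u w) :
    ∃ i ≤ w.length, ∃ a, u = w.insertIdx i a := by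
  obtain ⟨i, hi, rfl⟩ := h
  exact ⟨i, by rw [length_eraseIdx_of_lt hi]; omega, u[i], (insertIdx_eraseIdx_getElem hi).symm⟩

theorem eq_of_delBit_of_vtSum_modEq {m : ℕ} {u v w : List Bool} (hm : u.length < m)
    (huv : vtSum u ≡ vtSum v [MOD m]) (hu : delBit u w) (hv : delBit v w) : u = v := by
  obtain ⟨i, hi, a, rfl⟩ := exists_eq_insertIdx_of_delBit hu
  obtain ⟨j, hj, b, rfl⟩ := exists_eq_insertIdx_of_delBit hv
  rw [length_insertIdx_of_le_length hi] at hm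
  rw [vtSum_insertIdx hi, vtSum_insertIdx hj] at huv
  have hδu := vtDelta_le hi a
  have hδv := vtDelta_le hj b
  exact insertIdx_eq_insertIdx_of_vtDelta_eq hi hj
    ((Nat.ModEq.add_left_cancel' _ huv).eq_of_lt_of_lt (by omega) (by omega))

theorem exists_delBit_of_insertIdx_eq {u v : List Bool} {i j : ℕ} {b c : Bool} (hij : i < j)
    (hi : i ≤ u.length) (hj : j ≤ v.length) (h : u.insertIdx i b = v.insertIdx j c) :
    ∃ w, delBit u w ∧ delBit v w := by
  have hlen : u.length = v.length := by
    have := congrArg length h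
    rwa [length_insertIdx_of_le_length hi, length_insertIdx_of_le_length hj,
      Nat.add_right_cancel_iff] at this
  have hu : u = (v.eraseIdx i).insertIdx (j - 1) c := by
    rw [insertIdx_eraseIdx_of_ge (by omega) (by omega), Nat.sub_add_cancel (by omega), ← h,
      eraseIdx_insertIdx_self]
  exact ⟨v.eraseIdx i, ⟨j - 1, by omega, by rw [hu, eraseIdx_insertIdx_self]⟩, ⟨i, by omega, rfl⟩⟩

theorem eq_or_exists_delBit_of_insBit {u v W : List Bool} (hu : insBit u W) (hv : insBit v W) :
    u = v ∨ ∃ w, delBit u w ∧ delBit v w := by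
  obtain ⟨b, i, hi, hW⟩ := hu
  obtain ⟨c, j, hj, hW'⟩ := hv
  rw [← insertIdx_eq_take_append_cons_drop hi] at hW
  rw [← insertIdx_eq_take_append_cons_drop hj] at hW'
  have h := hW.symm.trans hW'
  rcases lt_trichotomy i j with hij | rfl | hij
  · exact .inr (exists_delBit_of_insertIdx_eq hij hi hj h)
  · left
    rw [← eraseIdx_insertIdx_self (l := u) (i := i) b, h, eraseIdx_insertIdx_self]
  · exact .inr ((exists_delBit_of_insertIdx_eq hij hj hi h.symm).imp fun _ => And.symm)

theorem vt_corrects_single_indel_general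
    (m α : ℕ)
    (u v : List Bool) (hu : u ∈ CVT α m) (hv : v ∈ CVT α m) :
    (∀ w, delBit u w → delBit v w → u = v) ∧
    (∀ w, insBit u w → insBit v w → u = v) := by
  have hdel : ∀ w, delBit u w → delBit v w → u = v := by
    intro w huw hvw
    have hpos : 0 < u.length := by obtain ⟨i, hi, -⟩ := huw; omega
    have hlen := hu.1
    exact eq_of_delBit_of_vtSum_modEq (by omega) (hu.2.trans hv.2.symm) huw hvw
  refine ⟨hdel, fun W huW hvW => ?_⟩
  obtain h | ⟨w, huw, hvw⟩ := eq_or_exists_delBit_of_insBit huW hvW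
  exacts [h, hdel w huw hvw]

/-- when the length of the stored word is known, the
variable-length VT code `C_VT(α, m)` corrects a single insertion or deletion. -/
theorem vt_corrects_single_indel
    (m α : ℕ) (hm : 1 ≤ m) (hα : α ≤ m - 1)
    (u v : List Bool) (hu : u ∈ CVT α m) (hv : v ∈ CVT α m)
    (hlen : u.length = v.length) :
    (∀ w, delBit u w → delBit v w → u = v) ∧
    (∀ w, insBit u w → insBit v w → u = v) :=
  vt_corrects_single_indel_general m α u v hu hv

end BinCode
end

section
/- Let q ≥ 2, m ≥ 1, 0 ≤ α ≤ q − 1 and 0 ≤ β ≤ m − 1, and let u, v ∈ C_Tq(α, β, m) with |u| = |v| ≤ m. If some word w ∈ Σ_q^* can be obtained from u by deleting a single symbol and also obtained from v by deleting a single symbol, then u = v; likewise, if some word w can be obtained from u by inserting a single symbol and also obtained from v by inserting a single symbol, then u = v. That is, when the length of the stored word is known, the variable-length Tenengolts code C_Tq(α, β, m) corrects a single insertion or deletion over Σ_q. -/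
open List

/-!
Two codewords with a common deletion lose the same symbol `b`, since the symbol sum is fixed
modulo `q`; so both are insertions of `b` into one word `x`. Inserting a symbol into `x` inserts
one bit into the ascent string `ζ(x)`, and `Σ (i-1) ζ(z)_i` is the Varshamov–Tenengolts syndrome
of `ζ(z)` without its leading `1`. As the modulus exceeds `|x| + 1`, that syndrome determines the
inserted bit up to moving it inside its run, so both codewords have the same ascent string.
Finally, if inserting `b` at positions `i < j` of `x` gives equal ascent strings, then all
comparisons around the cycle `b, x_i, …, x_{j-1}, b` agree; they cannot all be strict descents,
so they are all `≤` and the cycle is constant. Two codewords with a common insertion have a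
common deletion, which reduces insertions to deletions.
-/

namespace List

variable {α : Type*}

theorem insertIdx_eq_take_append_cons_drop {l : List α} {i : ℕ} (hi : i ≤ l.length) (a : α) :
    l.insertIdx i a = l.take i ++ a :: l.drop i := by
  induction l generalizing i with
  | nil => simp_all
  | cons c l ih => cases i <;> simp_all

theorem insertIdx_eq_insertIdx_of_replicate {l : List α} {i k : ℕ} {a : α}
    (hk : i + k ≤ l.length) (h : (l.drop i).take k = replicate k a) :
    l.insertIdx i a = l.insertIdx (i + k) a := by
  have hdrop : l.drop i = replicate k a ++ l.drop (i + k) := by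
    rw [← h, ← drop_drop, take_append_drop]
  rw [insertIdx_eq_take_append_cons_drop (by omega), insertIdx_eq_take_append_cons_drop hk,
    take_add, h, hdrop, append_assoc, ← cons_append, ← replicate_succ, replicate_succ',
    append_assoc, singleton_append]

theorem eq_replicate_of_cons_eq_append_singleton {a b : α} {l : List α}
    (h : a :: l = l ++ [b]) : l = replicate l.length a ∧ b = a := by
  induction l generalizing a with
  | nil => simp_all
  | cons c l ih =>
    obtain ⟨rfl, h⟩ := cons_eq_cons.1 h
    obtain ⟨hl, rfl⟩ := ih h
    exact ⟨by rw [length_cons, replicate_succ, ← hl], rfl⟩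

end List

namespace NoisyDup

variable {q : ℕ}

section Ascents

variable {α : Type*} [LinearOrder α]

def ascents : α → List α → List Bool
  | _, [] => []
  | a, c :: l => decide (a ≤ c) :: ascents c l

@[simp]
theorem ascents_nil (a : α) : ascents a [] = [] := rfl

@[simp]
theorem ascents_cons (a c : α) (l : List α) :
    ascents a (c :: l) = decide (a ≤ c) :: ascents c l := rfl

@[simp]
theorem length_ascents (a : α) (l : List α) : (ascents a l).length = l.length := by
  induction l generalizing a <;> simp_all

theorem getElem_ascents (a : α) (l : List α) (k : ℕ) (hk : k < l.length) :
    (ascents a l)[k]'(by simpa using hk) = decide ((a :: l)[k]'(by simp; omega) ≤ l[k]) := by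
  induction l generalizing a k with
  | nil => simp at hk
  | cons c l ih =>
    cases k with
    | zero => simp
    | succ k => simpa using ih c k (by simpa using hk)

theorem ascents_append (a : α) (l₁ l₂ : List α) :
    ascents a (l₁ ++ l₂) = ascents a l₁ ++ ascents ((a :: l₁).getLast (cons_ne_nil _ _)) l₂ := by
  induction l₁ generalizing a with
  | nil => rfl
  | cons c l ih => simp [ih]

theorem decide_le_eq_or (a b c : α) :
    decide (a ≤ b) = decide (a ≤ c) ∨ decide (b ≤ c) = decide (a ≤ c) := by
  simp only [decide_eq_decide]
  by_cases hab : a ≤ b <;> by_cases hac : a ≤ c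
  · exact .inl (iff_of_true hab hac)
  · exact .inr (iff_of_false (fun hbc => hac (hab.trans hbc)) hac)
  · exact .inr (iff_of_true ((not_le.1 hab).le.trans hac) hac)
  · exact .inl (iff_of_false hab hac)

theorem ascents_insertIdx (a b : α) {l : List α} {p : ℕ} (hp : p ≤ l.length) :
    ∃ t ≤ l.length, ∃ e, ascents a (l.insertIdx p b) = (ascents a l).insertIdx t e := by
  induction l generalizing a p with
  | nil => exact ⟨0, le_rfl, decide (a ≤ b), by simp_all⟩
  | cons c l ih =>
    cases p with
    | zero =>
      rcases decide_le_eq_or a b c with h | h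
      · exact ⟨1, by simp, decide (b ≤ c), by simp [h]⟩
      · exact ⟨0, by simp, decide (a ≤ b), by simp [h]⟩
    | succ p =>
      obtain ⟨t, ht, e, he⟩ := ih c (by simpa using hp)
      exact ⟨t + 1, by simpa using ht, e, by simp [he]⟩

theorem isChain_of_ascents_eq_replicate {a : α} {l : List α} {e : Bool}
    (h : ascents a l = replicate l.length e) : IsChain (fun x y => decide (x ≤ y) = e) (a :: l) := by
  induction l generalizing a with
  | nil => exact isChain_singleton a
  | cons c l ih =>
    rw [ascents_cons, length_cons, replicate_succ, cons_eq_cons] at h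
    exact isChain_cons_cons.2 ⟨h.1, ih h.2⟩

theorem eq_replicate_of_ascents_cycle_eq_replicate {b : α} {l : List α} {e : Bool}
    (h : ascents b (l ++ [b]) = replicate (l.length + 1) e) : l = replicate l.length b := by
  have hchain := isChain_of_ascents_eq_replicate (l := l ++ [b]) (by simpa using h)
  rw [← cons_append] at hchain
  cases e
  · have hlt : Pairwise (fun x y => y < x) ((b :: l) ++ [b]) :=
      isChain_iff_pairwise.1 (hchain.imp fun x y hxy => by simpa using hxy)
    exact absurd ((pairwise_append.1 hlt).2.2 b mem_cons_self b mem_cons_self) (lt_irrefl b)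
  · have hle : Pairwise (· ≤ ·) ((b :: l) ++ [b]) :=
      isChain_iff_pairwise.1 (hchain.imp fun x y hxy => by simpa using hxy)
    refine eq_replicate_iff.2 ⟨rfl, fun c hc => le_antisymm ?_ ?_⟩
    · exact (pairwise_append.1 hle).2.2 c (mem_cons_of_mem b hc) b mem_cons_self
    · exact rel_of_pairwise_cons (pairwise_append.1 hle).1 hc

theorem eq_replicate_of_ascents_cons_eq_ascents_append {a b : α} {l : List α}
    (h : ascents a (b :: l) = ascents a (l ++ [b])) : l = replicate l.length b := by
  cases l with
  | nil => rfl
  | cons c l =>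
    -- `ascents b (c :: l ++ [b])`, read from either end of the cycle
    have hcycle : decide (b ≤ c) :: ascents c (l ++ [b]) =
        ascents c (l ++ [b]) ++ [decide ((b :: c :: l).getLast (cons_ne_nil _ _) ≤ b)] := by
      rw [← ascents_cons, ← cons_append, ascents_append, (cons_eq_cons.1 h).2]; rfl
    apply eq_replicate_of_ascents_cycle_eq_replicate (e := decide (b ≤ c))
    rw [cons_append, ascents_cons, (eq_replicate_of_cons_eq_append_singleton hcycle).1]
    simp [replicate_succ]

theorem cons_eq_insertIdx_of_ascents_eq {a b : α} {l : List α} {j : ℕ} (hj : j ≤ l.length)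
    (h : ascents a (b :: l) = ascents a (l.insertIdx j b)) : b :: l = l.insertIdx j b := by
  have hsplit : l.insertIdx j b = (l.take j ++ [b]) ++ l.drop j := by
    rw [insertIdx_eq_take_append_cons_drop hj, append_assoc, singleton_append]
  have hl : b :: l = (b :: l.take j) ++ l.drop j := by rw [cons_append, take_append_drop]
  rw [hsplit, hl, ascents_append, ascents_append] at h
  have hrep := eq_replicate_of_ascents_cons_eq_ascents_append
    (append_inj_left' h (by simp))
  rw [hsplit, hl, hrep, ← replicate_succ, replicate_succ']

theorem insertIdx_eq_of_ascents_eq (a b : α) {l : List α} {i j : ℕ} (hi : i ≤ l.length)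
    (hj : j ≤ l.length) (h : ascents a (l.insertIdx i b) = ascents a (l.insertIdx j b)) :
    l.insertIdx i b = l.insertIdx j b := by
  wlog hij : i ≤ j generalizing i j
  · exact (this hj hi h.symm (le_of_not_ge hij)).symm
  induction l generalizing a i j with
  | nil =>
    obtain rfl : j = 0 := Nat.le_zero.1 hj
    rw [Nat.le_zero.1 hij]
  | cons c l ih =>
    cases i with
    | zero => exact cons_eq_insertIdx_of_ascents_eq hj h
    | succ i =>
      obtain ⟨j, rfl⟩ : ∃ j', j = j' + 1 := ⟨j - 1, by omega⟩
      simp only [insertIdx_succ_cons, ascents_cons, cons.injEq, true_and] at h ⊢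
      exact ih c (by simpa using hi) (by simpa using hj) h (by omega)

theorem ascents_insertIdx_of_isBot {a : α} (ha : IsBot a) {l : List α} {A : List Bool}
    (hA : ascents a l = true :: A) (b : α) {p : ℕ} (hp : p ≤ l.length) :
    ∃ t ≤ A.length, ∃ e, ascents a (l.insertIdx p b) = true :: A.insertIdx t e := by
  obtain ⟨t, ht, e, he⟩ := ascents_insertIdx a b hp
  have hlA : l.length = A.length + 1 := by rw [← length_ascents a l, hA, length_cons]
  rw [hA] at he
  cases t with
  | zero =>
    obtain ⟨c, L, hL⟩ := exists_cons_of_length_eq_add_one (length_insertIdx_of_le_length hp b)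
    rw [hL, ascents_cons, decide_eq_true (ha c), insertIdx_zero, cons.injEq] at he
    exact ⟨0, Nat.zero_le _, true, by rw [hL, ascents_cons, decide_eq_true (ha c), he.2]; rfl⟩
  | succ t => exact ⟨t, by omega, e, he⟩

end Ascents

def vtIncrement (s : List Bool) (t : ℕ) (e : Bool) : ℕ :=
  (if e then t + 1 else 0) + (s.drop t).count true

theorem vtIncrement_lt {s : List Bool} {t : ℕ} (ht : t ≤ s.length) (e : Bool) :
    vtIncrement s t e < s.length + 2 := by
  have : (s.drop t).count true ≤ s.length - t := length_drop ▸ count_le_length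
  unfold vtIncrement
  split <;> omega

theorem vtSum_cons (x : Bool) (s : List Bool) :
    vtSum (x :: s) = (if x then 1 else 0) + s.count true + vtSum s := by
  suffices h : ∀ k, ((s.zipIdx (k + 1)).map fun p => if p.1 then p.2 + 1 else 0).sum =
      s.count true + ((s.zipIdx k).map fun p => if p.1 then p.2 + 1 else 0).sum by
    simp [vtSum, Function.comp_def, h, add_assoc]
  induction s with
  | nil => simp
  | cons y s ih => intro k; cases y <;> simp [ih]; omega

theorem vtSum_insertIdx {s : List Bool} {t : ℕ} (ht : t ≤ s.length) (e : Bool) :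
    vtSum (s.insertIdx t e) = vtSum s + vtIncrement s t e := by
  induction s generalizing t with
  | nil => obtain rfl : t = 0 := Nat.le_zero.1 ht; simp [vtSum_cons, vtIncrement]; omega
  | cons x s ih =>
    cases t with
    | zero => simp [vtSum_cons, vtIncrement]; omega
    | succ t =>
      rw [insertIdx_succ_cons, vtSum_cons, vtSum_cons, ih (by simpa using ht),
        ((perm_insertIdx e s (by simpa using ht)).count_eq true), count_cons]
      cases e <;> simp [vtIncrement] <;> omega

theorem insertIdx_eq_of_vtIncrement_eq {s : List Bool} {t r : ℕ} {e c : Bool} (htr : t ≤ r)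
    (hr : r ≤ s.length) (h : vtIncrement s t e = vtIncrement s r c) :
    s.insertIdx t e = s.insertIdx r c := by
  obtain ⟨k, rfl⟩ := Nat.exists_eq_add_of_le htr
  set seg := (s.drop t).take k
  have hsplit : (s.drop t).count true = seg.count true + (s.drop (t + k)).count true := by
    rw [← take_append_drop k (s.drop t), count_append, drop_drop]
  have hlen : seg.length = k := by simp [seg]; omega
  have hcount : seg.count true ≤ k := hlen ▸ count_le_length
  cases e <;> cases c <;> simp only [vtIncrement, Bool.false_eq_true, if_false, if_true] at h
  · have hnone : true ∉ seg := count_eq_zero.1 (by omega)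
    refine insertIdx_eq_insertIdx_of_replicate hr (eq_replicate_iff.2 ⟨hlen, fun b hb => ?_⟩)
    exact Bool.eq_false_iff.2 (ne_of_mem_of_not_mem hb hnone)
  · omega
  · omega
  · have hall : ∀ b ∈ seg, true = b := count_eq_length.1 (by omega)
    exact insertIdx_eq_insertIdx_of_replicate hr
      (eq_replicate_iff.2 ⟨hlen, fun b hb => (hall b hb).symm⟩)

theorem insertIdx_eq_of_vtSum_modEq {s : List Bool} {t r m : ℕ} {e c : Bool}
    (ht : t ≤ s.length) (hr : r ≤ s.length) (hm : s.length + 2 ≤ m)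
    (h : vtSum (s.insertIdx t e) ≡ vtSum (s.insertIdx r c) [MOD m]) :
    s.insertIdx t e = s.insertIdx r c := by
  rw [vtSum_insertIdx ht, vtSum_insertIdx hr] at h
  have hinc := (Nat.ModEq.add_left_cancel' _ h).eq_of_lt_of_lt
    ((vtIncrement_lt ht e).trans_le hm) ((vtIncrement_lt hr c).trans_le hm)
  rcases le_total t r with htr | hrt
  · exact insertIdx_eq_of_vtIncrement_eq htr hr hinc
  · exact (insertIdx_eq_of_vtIncrement_eq hrt ht hinc.symm).symm

theorem zeta_eq_ascents (z : List (ZMod q)) : zeta z = ascents 0 (z.map ZMod.val) := by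
  refine ext_getElem (by simp [zeta]) fun k hk _ => ?_
  have hkz : k < z.length := by simpa [zeta] using hk
  rw [getElem_ascents _ _ k (by simpa using hkz)]
  cases k with
  | zero => simp [zeta]
  | succ k => simp [zeta, getElem?_eq_getElem (by omega : k < z.length)]

theorem tqSum_eq_vtSum {z : List (ZMod q)} {e : Bool} {s : List Bool} (h : zeta z = e :: s) :
    tqSum z = vtSum s := by
  simp [tqSum, h, vtSum, zipIdx_succ, Function.comp_def]

theorem insertIdx_eq_of_tqSum_modEq [NeZero q] {x : List (ZMod q)} {b : ZMod q} {i j m : ℕ}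
    (hi : i ≤ x.length) (hj : j ≤ x.length) (hm : x.length + 1 ≤ m)
    (h : tqSum (x.insertIdx i b) ≡ tqSum (x.insertIdx j b) [MOD m]) :
    x.insertIdx i b = x.insertIdx j b := by
  have hζ (p : ℕ) : zeta (x.insertIdx p b) = ascents 0 ((x.map ZMod.val).insertIdx p b.val) := by
    rw [zeta_eq_ascents, map_insertIdx]
  suffices hasc : zeta (x.insertIdx i b) = zeta (x.insertIdx j b) by
    rw [hζ, hζ] at hasc
    refine map_injective_iff.2 (ZMod.val_injective q) ?_
    rw [map_insertIdx, map_insertIdx]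
    exact insertIdx_eq_of_ascents_eq 0 _ (by simpa) (by simpa) hasc
  rcases x with _ | ⟨a, l⟩
  · rw [Nat.le_zero.1 hi, Nat.le_zero.1 hj]
  have hA : ascents 0 ((a :: l).map ZMod.val) = true :: ascents a.val (l.map ZMod.val) := by
    simp
  obtain ⟨t, ht, e, he⟩ := ascents_insertIdx_of_isBot Nat.zero_le hA b.val (p := i) (by simpa)
  obtain ⟨r, hr, c, hc⟩ := ascents_insertIdx_of_isBot Nat.zero_le hA b.val (p := j) (by simpa)
  rw [← hζ] at he hc
  rw [he, hc, insertIdx_eq_of_vtSum_modEq ht hr (by simp at hm ⊢; omega)]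
  rwa [← tqSum_eq_vtSum he, ← tqSum_eq_vtSum hc]

theorem sum_eq_of_mem_CTq [NeZero q] {α β m : ℕ} {u v : List (ZMod q)}
    (hu : u ∈ CTq α β m) (hv : v ∈ CTq α β m) : u.sum = v.sum := by
  have h := (ZMod.natCast_eq_natCast_iff' _ _ q).2 (hu.2.1.trans hv.2.1.symm)
  simpa [Nat.cast_list_sum] using h

theorem tqSum_modEq_of_mem_CTq {α β m : ℕ} {u v : List (ZMod q)}
    (hu : u ∈ CTq α β m) (hv : v ∈ CTq α β m) : tqSum u ≡ tqSum v [MOD m] :=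
  hu.2.2.trans hv.2.2.symm

theorem eq_of_eraseIdx_eq [NeZero q] {α β m : ℕ} {u v : List (ZMod q)}
    (hu : u ∈ CTq α β m) (hv : v ∈ CTq α β m) {i j : ℕ} (hi : i < u.length) (hj : j < v.length)
    (h : u.eraseIdx i = v.eraseIdx j) : u = v := by
  have hxu := length_eraseIdx_add_one hi
  have hxv := length_eraseIdx_add_one hj
  have hx := congrArg length h
  have hsym : u[i] = v[j] := by
    have hs := sum_eq_of_mem_CTq hu hv
    rw [← insertIdx_eraseIdx_getElem hi, ← insertIdx_eraseIdx_getElem hj,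
      sum_insertIdx (by omega) fun _ _ => .all _ _, sum_insertIdx (by omega) fun _ _ => .all _ _,
      h] at hs
    exact add_right_cancel hs
  have hmod := tqSum_modEq_of_mem_CTq hu hv
  rw [← insertIdx_eraseIdx_getElem hi, ← insertIdx_eraseIdx_getElem hj, hsym, h] at hmod ⊢
  exact insertIdx_eq_of_tqSum_modEq (by omega) (by omega) (by have := hu.1; omega) hmod

theorem eq_of_insertIdx_eq [NeZero q] {α β m : ℕ} {u v : List (ZMod q)}
    (hu : u ∈ CTq α β m) (hv : v ∈ CTq α β m) {i j : ℕ} {b c : ZMod q} (hi : i ≤ u.length)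
    (hj : j ≤ v.length) (h : u.insertIdx i b = v.insertIdx j c) : u = v := by
  wlog hij : i ≤ j generalizing u v i j b c
  · exact (this hv hu hj hi h.symm (le_of_not_ge hij)).symm
  rcases hij.eq_or_lt with rfl | hij
  · simpa using congrArg (eraseIdx · i) h
  have hlen := congrArg length h
  rw [length_insertIdx_of_le_length hi, length_insertIdx_of_le_length hj] at hlen
  refine eq_of_eraseIdx_eq hu hv (i := j - 1) (j := i) (by omega) (by omega) ?_
  have hv' : v = (u.eraseIdx (j - 1)).insertIdx i b := by
    rw [insertIdx_eraseIdx_of_le (by omega) (by omega), Nat.sub_add_cancel (by omega), h,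
      eraseIdx_insertIdx_self]
  rw [hv', eraseIdx_insertIdx_self]

theorem tenengolts_corrects_single_indel_general
    (q m α β : ℕ) (hq : 2 ≤ q)
    (u v : List (ZMod q)) (hu : u ∈ CTq (q := q) α β m) (hv : v ∈ CTq (q := q) α β m) :
    (∀ w, delQ u w → delQ v w → u = v) ∧
    (∀ w, insQ u w → insQ v w → u = v) := by
  have : NeZero q := ⟨by omega⟩
  refine ⟨?_, ?_⟩
  · rintro w ⟨i, hi, rfl⟩ ⟨j, hj, hw⟩
    exact eq_of_eraseIdx_eq hu hv hi hj hw
  · rintro w ⟨i, b, hi, rfl⟩ ⟨j, c, hj, hw⟩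
    rw [← insertIdx_eq_take_append_cons_drop hi, ← insertIdx_eq_take_append_cons_drop hj] at hw
    exact eq_of_insertIdx_eq hu hv hi hj hw

/-- when the length of the stored word is known, Tenengolts'
variable-length `q`-ary code `C_Tq(α, β, m)` corrects a single insertion or
deletion. -/
theorem tenengolts_corrects_single_indel
    (q m α β : ℕ) (hq : 2 ≤ q) (hm : 1 ≤ m) (hα : α ≤ q - 1) (hβ : β ≤ m - 1)
    (u v : List (ZMod q)) (hu : u ∈ CTq (q := q) α β m) (hv : v ∈ CTq (q := q) α β m)
    (hlen : u.length = v.length) :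
    (∀ w, delQ u w → delQ v w → u = v) ∧
    (∀ w, insQ u w → insQ v w → u = v) :=
  tenengolts_corrects_single_indel_general q m α β hq u v hu hv

end NoisyDup
end
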